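/- arXiv:2107.08877 — 3 statements merged into one kernel-verified Lean document; each statement's English description precedes it below -/
import Mathlib

section
/- Let γ, β ∈ Y and let N be a G-invariant subgroup of V (i.e. N = N^G ≤ V). If N·H_{γ,i} = N·H_{β,i} for all i ≥ 1, then J_γ + (N−1)ℤG = J_β + (N−1)ℤG as right ideals of ℤG. -/
noncomputable section

/-- Parameter sequences: `Y = {0,1}^ℕ`; the paper's `λ(n)` (for `n ≥ 1`) is `l (n-1) : Bool`,
with `0 ↔ false` and `1 ↔ true`. -/
abbrev Y : Type := ℕ → Bool

/-- The 𝔽₂-vector space `V` with basis `{e i, f i : i ∈ ℤ}` (basis indexed by `ℤ × Bool`). -/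
abbrev Vsp : Type := (ℤ × Bool) →₀ ZMod 2

/-- The basis vector `e i`. -/
def e (i : ℤ) : Vsp := Finsupp.single (i, false) 1

/-- The basis vector `f i`. -/
def f (i : ℤ) : Vsp := Finsupp.single (i, true) 1

/-- The permutation of the basis swapping `e 0` and `f 0`. -/
def aPerm : Equiv.Perm (ℤ × Bool) := Equiv.swap ((0 : ℤ), false) ((0 : ℤ), true)

/-- The shift permutation of the basis, `e i ↦ e (i+1)`, `f i ↦ f (i+1)`. -/
def tPerm : Equiv.Perm (ℤ × Bool) := (Equiv.addRight (1 : ℤ)).prodCongr (Equiv.refl Bool)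

/-- The automorphism of `V` induced by a permutation of the basis, viewed as an automorphism
of the (multiplicatively written) group `V`. -/
def permAut (σ : Equiv.Perm (ℤ × Bool)) : MulAut (Multiplicative Vsp) :=
  AddEquiv.toMultiplicative (Finsupp.domCongr σ : Vsp ≃+ Vsp)

/-- The automorphism `a` of `V`. -/
def aAut : MulAut (Multiplicative Vsp) := permAut aPerm

/-- The automorphism `t` of `V`. -/
def tAut : MulAut (Multiplicative Vsp) := permAut tPerm

/-- The subgroup `⟨a, t⟩ ≤ GL(V)`. -/
def Asub : Subgroup (MulAut (Multiplicative Vsp)) := Subgroup.closure {aAut, tAut}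

/-- The group `G = V ⋊ ⟨a, t⟩ ≅ C₂ ≀ C₂ ≀ C_∞`. -/
abbrev G : Type := Multiplicative Vsp ⋊[Asub.subtype] ↥Asub

/-- The inclusion `V → G`. -/
def ofV (v : Vsp) : G := SemidirectProduct.inl (Multiplicative.ofAdd v)

/-- A subgroup of `V`, viewed as a subgroup of `G`. -/
def subgroupOfV (H : AddSubgroup Vsp) : Subgroup G :=
  Subgroup.map SemidirectProduct.inl (AddSubgroup.toSubgroup H)

/-- The sequence `c_λ`: for `n ≥ 1`, `c (2n-1) = e n`, `c (2n) = f n` if `λ(n) = 0`, and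
`c (2n-1) = f n`, `c (2n) = e n` if `λ(n) = 1`. -/
def cseq (l : Y) (m : ℕ) : Vsp :=
  if (m % 2 = 1) ↔ (l ((m + 1) / 2 - 1) = false) then e ((m + 1) / 2) else f ((m + 1) / 2)

/-- The subgroup `H_{λ,i} = ⟨e 0, f 0, e (-1), f (-1), …, e (-i), f (-i), c 1, …, c i⟩ ≤ V`. -/
def Hsub (l : Y) (i : ℕ) : AddSubgroup Vsp :=
  AddSubgroup.closure
    ((fun j : ℕ => e (-(j : ℤ))) '' Set.Icc 0 i ∪ (fun j : ℕ => f (-(j : ℤ))) '' Set.Icc 0 i ∪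
      cseq l '' Set.Icc 1 i)

/-- The integral group ring `ℤG`. -/
abbrev ZG : Type := MonoidAlgebra ℤ G

/-- The element of `ℤG` corresponding to `v ∈ V ≤ G`. -/
def zOfV (v : Vsp) : ZG := MonoidAlgebra.of ℤ G (ofV v)

/-- The (left) ideal of the group ring `kG` generated by `{g - 1 : g ∈ S}`; this is the
mirror image of the right ideal `(S - 1)kG` of the paper (all modules are taken as left
modules here, mirroring the right modules of the paper). -/
def grpIdeal (k : Type) [CommRing k] (S : Set G) : Ideal (MonoidAlgebra k G) :=
  Ideal.span ((fun g : G => (MonoidAlgebra.of k G g : MonoidAlgebra k G) - 1) '' S)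

/-- The permutation module `U_{λ,i} = 𝔽_{p i}G/(H_{λ,i} - 1)𝔽_{p i}G`. -/
def Ui (p : ℕ → ℕ) (l : Y) (i : ℕ) : Type :=
  MonoidAlgebra (ZMod (p i)) G ⧸ grpIdeal (ZMod (p i)) (subgroupOfV (Hsub l i) : Set G)

instance (p : ℕ → ℕ) (l : Y) (i : ℕ) : AddCommGroup (Ui p l i) :=
  inferInstanceAs (AddCommGroup
    (MonoidAlgebra (ZMod (p i)) G ⧸ grpIdeal (ZMod (p i)) (subgroupOfV (Hsub l i) : Set G)))

instance (p : ℕ → ℕ) (l : Y) (i : ℕ) : Module (MonoidAlgebra (ZMod (p i)) G) (Ui p l i) :=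
  inferInstanceAs (Module (MonoidAlgebra (ZMod (p i)) G)
    (MonoidAlgebra (ZMod (p i)) G ⧸ grpIdeal (ZMod (p i)) (subgroupOfV (Hsub l i) : Set G)))

/-- The canonical ring homomorphism `ℤG → 𝔽_qG`, reducing coefficients mod `q`. -/
def coeffHom (q : ℕ) : ZG →+* MonoidAlgebra (ZMod q) G :=
  ((MonoidAlgebra.lift ℤ (MonoidAlgebra (ZMod q) G) G) (MonoidAlgebra.of (ZMod q) G)).toRingHom

/-- `U_{λ,i}` as a `ℤG`-module. -/
instance (p : ℕ → ℕ) (l : Y) (i : ℕ) : Module ZG (Ui p l i) :=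
  Module.compHom _ (coeffHom (p i))

/-- The module generator `u_{λ,i} = 1 + (H_{λ,i} - 1)𝔽_{p i}G` of `U_{λ,i}`. -/
def ui (p : ℕ → ℕ) (l : Y) (i : ℕ) : Ui p l i :=
  (Submodule.Quotient.mk 1 :
    MonoidAlgebra (ZMod (p i)) G ⧸ grpIdeal (ZMod (p i)) (subgroupOfV (Hsub l i) : Set G))

/-- The index set `{1, 2, 3, …}` for the sequences `(p_i)` and `(H_{λ,i})`. -/
abbrev Idx : Type := {i : ℕ // 1 ≤ i}

/-- The element `u_λ = (u_{λ,1}, u_{λ,2}, …) ∈ ∏_{i ≥ 1} U_{λ,i}`. -/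
def ul (p : ℕ → ℕ) (l : Y) : ∀ i : Idx, Ui p l i.1 := fun i => ui p l i.1

/-- The module `M_λ`: the cyclic `ℤG`-submodule of `∏_{i ≥ 1} U_{λ,i}` generated by `u_λ`. -/
def Ml (p : ℕ → ℕ) (l : Y) : Submodule ZG (∀ i : Idx, Ui p l i.1) :=
  Submodule.span ZG {ul p l}

/-- The annihilator ideal `J_λ = ann_{ℤG}(u_λ)`. -/
def Jl (p : ℕ → ℕ) (l : Y) : Ideal ZG :=
  LinearMap.ker (LinearMap.toSpanSingleton ZG (∀ i : Idx, Ui p l i.1) (ul p l))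

/-- The submodule `M(N-1)` of `M = M_λ`, spanned by the elements `(x-1)m`, `m ∈ M`, `x ∈ N`. -/
def MlAug (p : ℕ → ℕ) (l : Y) (N : AddSubgroup Vsp) : Submodule ZG ↥(Ml p l) :=
  Submodule.span ZG {z : ↥(Ml p l) | ∃ x ∈ N, ∃ m : ↥(Ml p l), z = (zOfV x - 1) • m}

/-- The ideal `(N - 1)ℤG` for a subgroup `N ≤ V`. -/
def augV (N : AddSubgroup Vsp) : Ideal ZG :=
  Ideal.span ((fun v : Vsp => zOfV v - 1) '' (N : Set Vsp))



/-!
Membership of `z` in the left ideal `kG(X - 1)` is decided by the sums of the coefficients of `z`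
over the left cosets of `X`. Take `z ∈ J_γ`. Its support is finite, so for some `i₀` the relations
`x⁻¹y ∈ H_{γ,i}` between points of the support no longer change for `i ≥ i₀`. Hence each coset
sum of `z` modulo `H_{γ,i₀}` is divisible by all of the distinct primes `p_i` with `i ≥ i₀`,
so it vanishes. It follows that `z` lies in `ℤG(H_{γ,i₀} - 1) ≤ ℤG(N - 1) + ℤG(H_{β,i₀} - 1)`.

Write `z = b + w` with `b ∈ ℤG(N - 1)` and `w ∈ ℤG(A - 1)`, where `A = H_{β,i₀}`. For each of the
finitely many `i < i₀`, with `H = H_{β,i} ≤ A`, the reduction of `w` lies in `𝔽_{p_i}G(N + H - 1)`.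
Split every `x ∈ G` as `x = r a n`, with `r` a fixed representative of `x(A + N)`, `a ∈ A` and
`n ∈ N`. Together with the modular law `(N + H) ∩ A = H + (N ∩ A)`, this splitting gives a
correction `c_i ∈ ℤG(N - 1) ∩ ℤG(A - 1)` such that `w - c_i` reduces into `𝔽_{p_i}G(H - 1)`.
The Chinese remainder theorem glues the `c_i` into one correction `c`, and then `w - c ∈ J_β`.
-/

theorem Finsupp.mapDomain_eq_zero_iff_forall_mem_support {α β M : Type*} [AddCommMonoid M]
    (f : α → β) (v : α →₀ M) : v.mapDomain f = 0 ↔ ∀ a ∈ v.support, v.mapDomain f (f a) = 0 := by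
  classical
  refine ⟨fun h a _ => by rw [h, Finsupp.zero_apply], fun h => ?_⟩
  ext b
  by_contra hb
  obtain ⟨a, ha, rfl⟩ :=
    Finset.mem_image.1 (Finsupp.mapDomain_support (Finsupp.mem_support_iff.2 hb))
  exact hb (h a ha)

theorem mapDomain_mk_apply_eq_of_le {Γ M : Type*} [Group Γ] [AddCommMonoid M]
    {X Y : Subgroup Γ} (hXY : X ≤ Y) {v : Γ →₀ M}
    (hv : ∀ t ∈ v.support, ∀ t' ∈ v.support, t⁻¹ * t' ∈ Y → t⁻¹ * t' ∈ X)
    {t : Γ} (ht : t ∈ v.support) :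
    v.mapDomain (QuotientGroup.mk : Γ → Γ ⧸ Y) t =
      v.mapDomain (QuotientGroup.mk : Γ → Γ ⧸ X) t := by
  classical
  have hcomp : (QuotientGroup.mk : Γ → Γ ⧸ Y) =
      Subgroup.quotientMapOfLE hXY ∘ (QuotientGroup.mk : Γ → Γ ⧸ X) := rfl
  rw [hcomp, Finsupp.mapDomain_comp]
  refine Finsupp.mapDomain_apply' ((QuotientGroup.mk : Γ → Γ ⧸ X) '' v.support) _
    (by exact_mod_cast Finsupp.mapDomain_support) ?_ ⟨t, ht, rfl⟩
  rintro _ ⟨a, ha, rfl⟩ _ ⟨b, hb, rfl⟩ hab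
  exact QuotientGroup.eq.2 (hv a ha b hb (QuotientGroup.eq.1 hab))

namespace MonoidAlgebra

theorem coeff_single_mul_eq_smul_mapDomain {R M : Type*} [Semiring R] [Monoid M]
    (g : M) (c : R) (z : MonoidAlgebra R M) :
    (single g c * z).coeff = c • z.coeff.mapDomain (g * ·) := by
  induction z using MonoidAlgebra.induction_linear with
  | zero => simp
  | add x y hx hy => simp [mul_add, hx, hy, Finsupp.mapDomain_add]
  | single x b => simp [single_mul_single, Finsupp.mapDomain_single]

theorem single_mem_supported {R M : Type*} [Semiring R] {T : Set M} {g : M} (hg : g ∈ T)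
    (c : R) : single g c ∈ supported R R T :=
  mem_supported.2 <| (Finset.coe_subset.2 Finsupp.support_single_subset).trans (by simpa using hg)

end MonoidAlgebra

theorem mapDomain_mk_mul_eq_zero {Γ R : Type*} [Group Γ] [Semiring R] {X : Subgroup Γ}
    {z : MonoidAlgebra R Γ} (hz : z.coeff.mapDomain (QuotientGroup.mk : Γ → Γ ⧸ X) = 0)
    (r : MonoidAlgebra R Γ) : (r * z).coeff.mapDomain (QuotientGroup.mk : Γ → Γ ⧸ X) = 0 := by
  induction r using MonoidAlgebra.induction_linear with
  | zero => simp
  | add x y hx hy => simp [add_mul, Finsupp.mapDomain_add, hx, hy]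
  | single g c =>
    have hmk : (QuotientGroup.mk : Γ → Γ ⧸ X) ∘ (g * ·) = (g • ·) ∘ QuotientGroup.mk := rfl
    rw [MonoidAlgebra.coeff_single_mul_eq_smul_mapDomain, Finsupp.mapDomain_smul,
      ← Finsupp.mapDomain_comp, hmk, Finsupp.mapDomain_comp, hz, Finsupp.mapDomain_zero,
      smul_zero]

section Transversal

variable {Γ : Type*} [Group Γ]

def transversalMul (M Z : Subgroup Γ) : Set Γ :=
  {t | (t : Γ ⧸ M).out⁻¹ * t ∈ Z}

theorem inv_mul_mem_of_mem_transversalMul {M Z : Subgroup Γ} {t t' : Γ}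
    (ht : t ∈ transversalMul M Z) (ht' : t' ∈ transversalMul M Z) (h : t⁻¹ * t' ∈ M) :
    t⁻¹ * t' ∈ Z := by
  change (t : Γ ⧸ M).out⁻¹ * t ∈ Z at ht
  rw [show (t : Γ ⧸ M) = t' from QuotientGroup.eq.2 h] at ht
  simpa [mul_assoc] using mul_mem (inv_mem ht) ht'

theorem out_mul_mem_transversalMul {M Z : Subgroup Γ} (hZM : Z ≤ M) (x : Γ) {g : Γ}
    (hg : g ∈ Z) : (x : Γ ⧸ M).out * g ∈ transversalMul M Z := by
  have : (((x : Γ ⧸ M).out * g : Γ) : Γ ⧸ M) = x :=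
    (QuotientGroup.eq.2 (by simpa using hZM hg)).symm.trans (QuotientGroup.out_eq' _)
  simpa [transversalMul, this] using hg

end Transversal

theorem exists_forall_mem_imp_mem_of_monotone {α : Type*} {X : ℕ → Set α} (hX : Monotone X)
    (D : Finset α) (n : ℕ) : ∃ i₀, n ≤ i₀ ∧ ∀ i, ∀ d ∈ D, d ∈ X i → d ∈ X i₀ := by
  have (d : α) : ∃ j, ∀ i, d ∈ X i → d ∈ X j :=
    (em (∃ i, d ∈ X i)).elim (fun ⟨j, hj⟩ => ⟨j, fun _ _ => hj⟩)
      (fun h => ⟨0, fun i hi => (h ⟨i, hi⟩).elim⟩)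
  choose j hj using this
  exact ⟨max n (D.sup j), le_max_left _ _, fun i d hd hdi =>
    hX ((Finset.le_sup hd).trans (le_max_right _ _)) (hj d i hdi)⟩

theorem eq_zero_of_forall_dvd_of_injOn {p : ℕ → ℕ} {n : ℕ} (hp : Set.InjOn p (Set.Ici n))
    {s : ℤ} (h : ∀ i, n ≤ i → (p i : ℤ) ∣ s) : s = 0 := by
  by_contra hs
  refine ((Set.Ici_infinite n).image hp).mono ?_ s.natAbs.divisors.finite_toSet
  rintro _ ⟨i, hi, rfl⟩
  exact Nat.mem_divisors.2 ⟨Int.natCast_dvd.1 (h i hi), Int.natAbs_ne_zero.2 hs⟩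

theorem exists_forall_sub_mem_of_pairwise_isCoprime {ι M : Type*} [DecidableEq ι]
    [AddCommGroup M] {s : Finset ι} {q : ι → ℤ}
    (hq : (s : Set ι).Pairwise fun i j => IsCoprime (q i) (q j))
    (B : AddSubgroup M) (C : ι → AddSubgroup M) (hC : ∀ i ∈ s, ∀ x : M, q i • x ∈ C i) (w : M)
    (hw : ∀ i ∈ s, ∃ b ∈ B, w - b ∈ C i) : ∃ b ∈ B, ∀ i ∈ s, w - b ∈ C i := by
  induction s using Finset.induction_on with
  | empty => exact ⟨0, zero_mem B, by simp⟩
  | insert j s hj ih =>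
    obtain ⟨b, hb, hbs⟩ := ih (hq.mono (by simp)) (fun i hi => hC i (by simp [hi]))
      (fun i hi => hw i (by simp [hi]))
    obtain ⟨b', hb', hb'j⟩ := hw j (by simp)
    obtain ⟨u, v, huv⟩ : IsCoprime (∏ i ∈ s, q i) (q j) := IsCoprime.prod_left fun i hi =>
      hq (by simp [hi]) (by simp) (ne_of_mem_of_not_mem hi hj)
    refine ⟨(v * q j) • b + (u * ∏ i ∈ s, q i) • b',
      add_mem (zsmul_mem hb _) (zsmul_mem hb' _), fun i hi => ?_⟩
    have hsplit : w - ((v * q j) • b + (u * ∏ i ∈ s, q i) • b') =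
        (v * q j) • (w - b) + (u * ∏ i ∈ s, q i) • (w - b') := by
      rw [smul_sub, smul_sub, sub_add_sub_comm, ← add_smul, add_comm (v * q j), huv, one_smul]
    rw [hsplit]
    rcases Finset.mem_insert.1 hi with rfl | hi
    · rw [mul_comm, mul_smul]
      exact add_mem (hC i (by simp) _) (zsmul_mem hb'j _)
    · obtain ⟨c, hc⟩ := Finset.dvd_prod_of_mem q hi
      rw [hc, mul_left_comm, mul_smul (q i)]
      exact add_mem (zsmul_mem (hbs i hi) _) (hC i (by simp [hi]) _)

theorem ofV_add (v w : Vsp) : ofV (v + w) = ofV v * ofV w := rfl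

theorem mem_subgroupOfV {X : AddSubgroup Vsp} {x : G} :
    x ∈ subgroupOfV X ↔ ∃ v ∈ X, ofV v = x := by
  simp only [subgroupOfV, Subgroup.mem_map]
  exact ⟨fun ⟨y, hy, h⟩ => ⟨y.toAdd, hy, h⟩, fun ⟨v, hv, h⟩ => ⟨.ofAdd v, hv, h⟩⟩

theorem ofV_mem_subgroupOfV {X : AddSubgroup Vsp} {v : Vsp} :
    ofV v ∈ subgroupOfV X ↔ v ∈ X :=
  Subgroup.mem_map_iff_mem SemidirectProduct.inl_injective

theorem subgroupOfV_mono : Monotone subgroupOfV :=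
  fun _ _ h => Subgroup.map_mono (AddSubgroup.toSubgroup.monotone h)

theorem subgroupOfV_inf (X Y : AddSubgroup Vsp) :
    subgroupOfV (X ⊓ Y) = subgroupOfV X ⊓ subgroupOfV Y := by
  rw [subgroupOfV, map_inf, Subgroup.map_inf_eq _ _ _ SemidirectProduct.inl_injective]; rfl

theorem Hsub_mono (l : Y) : Monotone (Hsub l) := fun _ _ hij =>
  AddSubgroup.closure_mono <| Set.union_subset_union
    (Set.union_subset_union (Set.image_mono (Set.Icc_subset_Icc_right hij))
      (Set.image_mono (Set.Icc_subset_Icc_right hij)))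
    (Set.image_mono (Set.Icc_subset_Icc_right hij))

section GroupRing

variable {k : Type} [CommRing k]

theorem commute_of_ofV (v w : Vsp) :
    Commute (MonoidAlgebra.of k G (ofV v)) (MonoidAlgebra.of k G (ofV w)) := by
  simp only [Commute, SemiconjBy, ← map_mul, ← ofV_add, add_comm]

theorem mem_grpIdeal_iff {X : Subgroup G} {z : MonoidAlgebra k G} :
    z ∈ grpIdeal k X ↔ z.coeff.mapDomain (QuotientGroup.mk : G → G ⧸ X) = 0 := by
  constructor
  · intro hz
    induction hz using Submodule.span_induction with
    | mem x hx =>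
      obtain ⟨g, hg, rfl⟩ := hx
      have hg1 : (g : G ⧸ X) = ((1 : G) : G ⧸ X) := QuotientGroup.eq.2 (by simpa using hg)
      simp [MonoidAlgebra.of_apply, MonoidAlgebra.one_def, Finsupp.mapDomain_sub, hg1]
    | zero => simp
    | add x y _ _ hx hy => simp [Finsupp.mapDomain_add, hx, hy]
    | smul r x _ hx => exact mapDomain_mk_mul_eq_zero hx r
  · intro hz
    set ρ : G → G := fun x => (x : G ⧸ X).out
    -- `∑ z_x ρ(x)` depends only on the coset sums of `z`, and `z - ∑ z_x ρ(x)` lies in the ideal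
    -- termwise.
    have hρz : z.coeff.mapDomain ρ = 0 := by
      rw [show ρ = Quotient.out ∘ QuotientGroup.mk from rfl, Finsupp.mapDomain_comp, hz,
        Finsupp.mapDomain_zero]
    have hdiff : z - .ofCoeff (z.coeff.mapDomain ρ) =
        z.coeff.sum fun x c => MonoidAlgebra.single x c - MonoidAlgebra.single (ρ x) c := by
      rw [Finsupp.sum_sub, MonoidAlgebra.sum_coeff_single, Finsupp.mapDomain,
        ← MonoidAlgebra.coeffAddEquiv_symm_apply, map_finsuppSum]
      rfl
    rw [hρz, MonoidAlgebra.ofCoeff_zero, sub_zero] at hdiff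
    rw [hdiff]
    refine Submodule.finsuppSum_mem _ _ _ _ fun x _ => ?_
    have hterm : MonoidAlgebra.single x (z.coeff x) - MonoidAlgebra.single (ρ x) (z.coeff x) =
        MonoidAlgebra.single (ρ x) (z.coeff x) * (MonoidAlgebra.of k G ((ρ x)⁻¹ * x) - 1) := by
      rw [mul_sub, mul_one, MonoidAlgebra.of_apply, MonoidAlgebra.single_mul_single,
        mul_inv_cancel_left, mul_one]
    rw [hterm]
    exact Ideal.mul_mem_left _ _
      (Ideal.subset_span ⟨_, QuotientGroup.eq.1 (QuotientGroup.out_eq' _), rfl⟩)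

theorem mem_grpIdeal_inf_of_support {Y Z : Subgroup G} {z : MonoidAlgebra k G}
    (hzY : z ∈ grpIdeal k Y)
    (hz : ∀ t ∈ z.coeff.support, ∀ t' ∈ z.coeff.support, t⁻¹ * t' ∈ Y → t⁻¹ * t' ∈ Z) :
    z ∈ grpIdeal k (Y ⊓ Z : Subgroup G) := by
  rw [mem_grpIdeal_iff] at hzY ⊢
  refine (Finsupp.mapDomain_eq_zero_iff_forall_mem_support _ _).2 fun t ht => ?_
  rw [← mapDomain_mk_apply_eq_of_le inf_le_left (fun a ha b hb h => ⟨h, hz a ha b hb h⟩) ht,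
    hzY, Finsupp.zero_apply]

variable (k) in
theorem grpIdeal_subgroupOfV_mono {X X' : AddSubgroup Vsp} (h : X ≤ X') :
    grpIdeal k (subgroupOfV X) ≤ grpIdeal k (subgroupOfV X') :=
  Ideal.span_mono (Set.image_mono (subgroupOfV_mono h))

variable (k) in
theorem grpIdeal_subgroupOfV_sup_le (P Q : AddSubgroup Vsp) :
    grpIdeal k (subgroupOfV (P ⊔ Q)) ≤
      grpIdeal k (subgroupOfV P) ⊔ grpIdeal k (subgroupOfV Q) := by
  refine Ideal.span_le.2 ?_
  rintro _ ⟨x, hx, rfl⟩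
  obtain ⟨v, hv, rfl⟩ := mem_subgroupOfV.1 hx
  obtain ⟨a, ha, b, hb, rfl⟩ := AddSubgroup.mem_sup.1 hv
  show MonoidAlgebra.of k G (ofV (a + b)) - 1 ∈ _
  have hsplit : MonoidAlgebra.of k G (ofV (a + b)) - 1 =
      MonoidAlgebra.of k G (ofV a) * (MonoidAlgebra.of k G (ofV b) - 1) +
        (MonoidAlgebra.of k G (ofV a) - 1) := by
    rw [ofV_add, map_mul]; noncomm_ring
  rw [hsplit]
  exact add_mem
    (Submodule.mem_sup_right (Ideal.mul_mem_left _ _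
      (Ideal.subset_span ⟨_, ofV_mem_subgroupOfV.2 hb, rfl⟩)))
    (Submodule.mem_sup_left (Ideal.subset_span ⟨_, ofV_mem_subgroupOfV.2 ha, rfl⟩))

-- With `r` the representative of `x(A ⊔ N)` and `x = r a n`: `x = r(a-1)(n-1) + r(a-1) + rn`.
theorem exists_decomposition_single (A N : AddSubgroup Vsp) (x : G) (c : k) :
    ∃ e α ν : MonoidAlgebra k G, MonoidAlgebra.single x c = e + α + ν ∧
      e ∈ grpIdeal k (subgroupOfV N) ⊓ grpIdeal k (subgroupOfV A) ∧
      α ∈ grpIdeal k (subgroupOfV A) ∧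
      α ∈ MonoidAlgebra.supported k k (transversalMul (subgroupOfV (A ⊔ N)) (subgroupOfV A)) ∧
      ν ∈ MonoidAlgebra.supported k k (transversalMul (subgroupOfV (A ⊔ N)) (subgroupOfV N)) := by
  set M := subgroupOfV (A ⊔ N)
  set r := (x : G ⧸ M).out
  obtain ⟨v, hv, hvx⟩ := mem_subgroupOfV.1 (QuotientGroup.eq.1 (QuotientGroup.out_eq' (x : G ⧸ M)))
  obtain ⟨a, ha, n, hn, rfl⟩ := AddSubgroup.mem_sup.1 hv
  set ofA := MonoidAlgebra.of k G (ofV a)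
  set ofN := MonoidAlgebra.of k G (ofV n)
  have hA : ofA - 1 ∈ grpIdeal k (subgroupOfV A) :=
    Ideal.subset_span ⟨_, ofV_mem_subgroupOfV.2 ha, rfl⟩
  have hN : ofN - 1 ∈ grpIdeal k (subgroupOfV N) :=
    Ideal.subset_span ⟨_, ofV_mem_subgroupOfV.2 hn, rfl⟩
  have hrN : MonoidAlgebra.single (r * ofV n) c = MonoidAlgebra.single r c * ofN := by
    simp [ofN, MonoidAlgebra.of_apply, MonoidAlgebra.single_mul_single]
  have hAN : (ofA - 1) * (ofN - 1) = (ofN - 1) * (ofA - 1) :=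
    (((commute_of_ofV _ _).sub_left (Commute.one_left _)).sub_right (Commute.one_right _)).eq
  have hMA : subgroupOfV A ≤ M := subgroupOfV_mono le_sup_left
  refine ⟨MonoidAlgebra.single r c * (ofA - 1) * (ofN - 1), MonoidAlgebra.single r c * (ofA - 1),
    MonoidAlgebra.single (r * ofV n) c, ?_, ⟨Ideal.mul_mem_left _ _ hN, ?_⟩,
    Ideal.mul_mem_left _ _ hA, ?_, ?_⟩
  · have hx : MonoidAlgebra.single x c = MonoidAlgebra.single r c * ofA * ofN := by
      simp only [r, ofA, ofN, MonoidAlgebra.of_apply, MonoidAlgebra.single_mul_single, mul_one,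
        mul_assoc, ← ofV_add, hvx, mul_inv_cancel_left]
    rw [hx, hrN]
    noncomm_ring
  · rw [mul_assoc, hAN, ← mul_assoc]
    exact Ideal.mul_mem_left _ _ hA
  · simp only [ofA, mul_sub, mul_one, MonoidAlgebra.of_apply, MonoidAlgebra.single_mul_single]
    refine sub_mem (MonoidAlgebra.single_mem_supported
      (out_mul_mem_transversalMul hMA x (ofV_mem_subgroupOfV.2 ha)) _)
      (MonoidAlgebra.single_mem_supported ?_ _)
    simpa using out_mul_mem_transversalMul hMA x (one_mem _)
  · exact MonoidAlgebra.single_mem_supported (out_mul_mem_transversalMul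
      (subgroupOfV_mono le_sup_right) x (ofV_mem_subgroupOfV.2 hn)) _

theorem exists_decomposition (A N : AddSubgroup Vsp) (w : MonoidAlgebra k G) :
    ∃ e α ν : MonoidAlgebra k G, w = e + α + ν ∧
      e ∈ grpIdeal k (subgroupOfV N) ⊓ grpIdeal k (subgroupOfV A) ∧
      α ∈ grpIdeal k (subgroupOfV A) ∧
      α ∈ MonoidAlgebra.supported k k (transversalMul (subgroupOfV (A ⊔ N)) (subgroupOfV A)) ∧
      ν ∈ MonoidAlgebra.supported k k (transversalMul (subgroupOfV (A ⊔ N)) (subgroupOfV N)) := by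
  induction w using MonoidAlgebra.induction_linear with
  | zero => exact ⟨0, 0, 0, by simp, zero_mem _, zero_mem _, zero_mem _, zero_mem _⟩
  | add w w' hw hw' =>
    obtain ⟨e, α, ν, rfl, he, hαA, hαT, hνT⟩ := hw
    obtain ⟨e', α', ν', rfl, he', hα'A, hα'T, hν'T⟩ := hw'
    exact ⟨e + e', α + α', ν + ν', by abel, add_mem he he', add_mem hαA hα'A,
      add_mem hαT hα'T, add_mem hνT hν'T⟩
  | single x c => exact exists_decomposition_single A N x c

end GroupRing
theorem augV_eq_grpIdeal (N : AddSubgroup Vsp) : augV N = grpIdeal ℤ (subgroupOfV N) := by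
  rw [augV, grpIdeal, subgroupOfV, Subgroup.coe_map, Set.image_image]
  rfl

theorem coeff_coeffHom (q : ℕ) (z : ZG) :
    (coeffHom q z).coeff = z.coeff.mapRange (Int.cast : ℤ → ZMod q) Int.cast_zero := by
  induction z using MonoidAlgebra.induction_linear with
  | zero => simp
  | add x y hx hy =>
    rw [map_add, MonoidAlgebra.coeff_add, hx, hy, MonoidAlgebra.coeff_add,
      Finsupp.mapRange_add (Int.cast_add (R := ZMod q))]
  | single g c =>
    simp [coeffHom, MonoidAlgebra.lift_single, MonoidAlgebra.of_apply, MonoidAlgebra.smul_single]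

theorem coeffHom_of (q : ℕ) (g : G) :
    coeffHom q (MonoidAlgebra.of ℤ G g) = MonoidAlgebra.of (ZMod q) G g :=
  MonoidAlgebra.ext (by simp [coeff_coeffHom, MonoidAlgebra.of_apply])

theorem coeffHom_surjective (q : ℕ) : Function.Surjective (coeffHom q) := fun y => by
  obtain ⟨f, hf⟩ := Finsupp.mapRange_surjective _ Int.cast_zero ZMod.intCast_surjective y.coeff
  exact ⟨.ofCoeff f, MonoidAlgebra.ext (by rw [coeff_coeffHom]; exact hf)⟩

theorem map_coeffHom_grpIdeal (q : ℕ) (S : Set G) :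
    Ideal.map (coeffHom q) (grpIdeal ℤ S) = grpIdeal (ZMod q) S := by
  simp only [grpIdeal, Ideal.map_span, Set.image_image, map_sub, map_one, coeffHom_of]

theorem coeffHom_mem_grpIdeal {q : ℕ} {S : Set G} {z : ZG} (hz : z ∈ grpIdeal ℤ S) :
    coeffHom q z ∈ grpIdeal (ZMod q) S :=
  map_coeffHom_grpIdeal q S ▸ Ideal.mem_map_of_mem _ hz

theorem exists_coeffHom_eq_of_mem_grpIdeal {q : ℕ} {S : Set G} {y : MonoidAlgebra (ZMod q) G}
    (hy : y ∈ grpIdeal (ZMod q) S) : ∃ z ∈ grpIdeal ℤ S, coeffHom q z = y :=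
  (Ideal.mem_map_iff_of_surjective _ (coeffHom_surjective q)).1
    (map_coeffHom_grpIdeal q S ▸ hy)

theorem coeffHom_mem_grpIdeal_iff {q : ℕ} {X : Subgroup G} {z : ZG} :
    coeffHom q z ∈ grpIdeal (ZMod q) X ↔
      ∀ c, (q : ℤ) ∣ z.coeff.mapDomain (QuotientGroup.mk : G → G ⧸ X) c := by
  rw [mem_grpIdeal_iff, coeff_coeffHom, Finsupp.mapDomain_mapRange _ _ _ _
    (Int.cast_add (R := ZMod q)), Finsupp.ext_iff]
  simp only [Finsupp.mapRange_apply, Finsupp.zero_apply, ZMod.intCast_zmod_eq_zero_iff_dvd]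

theorem mem_Jl_iff {p : ℕ → ℕ} {l : Y} {z : ZG} :
    z ∈ Jl p l ↔
      ∀ i, 1 ≤ i → coeffHom (p i) z ∈ grpIdeal (ZMod (p i)) (subgroupOfV (Hsub l i)) := by
  have hsmul (i : ℕ) : z • ui p l i = Submodule.Quotient.mk (coeffHom (p i) z) :=
    (Submodule.Quotient.mk_smul _ _ _).symm.trans (congrArg _ (mul_one _))
  simp only [Jl, LinearMap.mem_ker, LinearMap.toSpanSingleton_apply, funext_iff, Pi.smul_apply,
    Pi.zero_apply, ul, hsmul, Subtype.forall]
  exact forall₂_congr fun i _ => Submodule.Quotient.mk_eq_zero _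

theorem exists_mem_augV_inf_coeffHom_sub_mem {H A N : AddSubgroup Vsp} (hHA : H ≤ A) (d : ℕ)
    {w : ZG} (hwA : w ∈ grpIdeal ℤ (subgroupOfV A))
    (hwK : coeffHom d w ∈ grpIdeal (ZMod d) (subgroupOfV (N ⊔ H))) :
    ∃ b ∈ augV N ⊓ grpIdeal ℤ (subgroupOfV A),
      coeffHom d (w - b) ∈ grpIdeal (ZMod d) (subgroupOfV H) := by
  obtain ⟨e, α, ν, rfl, ⟨heN, heA⟩, hαA, hαT, hνT⟩ := exists_decomposition A N w
  have hνA : ν ∈ grpIdeal ℤ (subgroupOfV A) := by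
    convert sub_mem (sub_mem hwA heA) hαA using 1; abel
  have hνAN : ν ∈ grpIdeal ℤ (subgroupOfV (A ⊓ N)) := by
    rw [subgroupOfV_inf]
    exact mem_grpIdeal_inf_of_support hνA fun t ht t' ht' h =>
      inv_mul_mem_of_mem_transversalMul (hνT ht) (hνT ht') (subgroupOfV_mono le_sup_left h)
  have hαK : coeffHom d α ∈ grpIdeal (ZMod d) (subgroupOfV (N ⊔ H)) := by
    have hsub : coeffHom d α = coeffHom d (e + α + ν) - coeffHom d e - coeffHom d ν := by
      simp only [map_add]; abel
    rw [hsub]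
    refine sub_mem (sub_mem hwK ?_) ?_ <;> refine coeffHom_mem_grpIdeal ?_
    · exact grpIdeal_subgroupOfV_mono ℤ le_sup_left heN
    · exact grpIdeal_subgroupOfV_mono ℤ (inf_le_right.trans le_sup_left) hνAN
  -- modular law: `(H ⊔ N) ⊓ A = H ⊔ (A ⊓ N)` since `H ≤ A`
  have hαH : coeffHom d α ∈ grpIdeal (ZMod d) (subgroupOfV (H ⊔ A ⊓ N)) := by
    rw [inf_comm, ← sup_inf_assoc_of_le _ hHA, sup_comm H N, subgroupOfV_inf]
    refine mem_grpIdeal_inf_of_support hαK fun t ht t' ht' h => ?_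
    have hsupp : (coeffHom d α).coeff.support ⊆ α.coeff.support := by
      rw [coeff_coeffHom]; exact Finsupp.support_mapRange
    exact inv_mul_mem_of_mem_transversalMul (hαT (hsupp ht)) (hαT (hsupp ht'))
      (subgroupOfV_mono (sup_le le_sup_right (hHA.trans le_sup_left)) h)
  obtain ⟨h, hh, _, hc, hsum⟩ :=
    Submodule.mem_sup.1 (grpIdeal_subgroupOfV_sup_le _ H (A ⊓ N) hαH)
  obtain ⟨c, hcI, rfl⟩ := exists_coeffHom_eq_of_mem_grpIdeal hc
  refine ⟨e + ν + c, ⟨?_, ?_⟩, ?_⟩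
  · rw [augV_eq_grpIdeal]
    exact add_mem (add_mem heN (grpIdeal_subgroupOfV_mono ℤ inf_le_right hνAN))
      (grpIdeal_subgroupOfV_mono ℤ inf_le_right hcI)
  · exact add_mem (add_mem heA (grpIdeal_subgroupOfV_mono ℤ inf_le_left hνAN))
      (grpIdeal_subgroupOfV_mono ℤ inf_le_left hcI)
  · rwa [show e + α + ν - (e + ν + c) = α - c by abel, map_sub, ← hsum, add_sub_cancel_right]
theorem exists_mem_grpIdeal_Hsub_of_mem_Jl {p : ℕ → ℕ} (hinj : Set.InjOn p (Set.Ici 1))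
    {l : Y} {z : ZG} (hz : z ∈ Jl p l) :
    ∃ i₀, 1 ≤ i₀ ∧ z ∈ grpIdeal ℤ (subgroupOfV (Hsub l i₀)) := by
  classical
  obtain ⟨i₀, hi₀, hstab⟩ := exists_forall_mem_imp_mem_of_monotone
    (X := fun i => (subgroupOfV (Hsub l i) : Set G)) (fun _ _ h => subgroupOfV_mono (Hsub_mono l h))
    ((z.coeff.support ×ˢ z.coeff.support).image fun q => q.1⁻¹ * q.2) 1
  refine ⟨i₀, hi₀, mem_grpIdeal_iff.2 <|
    (Finsupp.mapDomain_eq_zero_iff_forall_mem_support _ _).2 fun t ht => ?_⟩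
  refine eq_zero_of_forall_dvd_of_injOn (hinj.mono (Set.Ici_subset_Ici.2 hi₀)) fun i hi => ?_
  have hrel : ∀ a ∈ z.coeff.support, ∀ b ∈ z.coeff.support,
      a⁻¹ * b ∈ subgroupOfV (Hsub l i) → a⁻¹ * b ∈ subgroupOfV (Hsub l i₀) := fun a ha b hb =>
    hstab i (a⁻¹ * b) (Finset.mem_image.2 ⟨(a, b), Finset.mem_product.2 ⟨ha, hb⟩, rfl⟩)
  rw [← mapDomain_mk_apply_eq_of_le (subgroupOfV_mono (Hsub_mono l hi)) hrel ht]
  exact coeffHom_mem_grpIdeal_iff.1 (mem_Jl_iff.1 hz i (hi₀.trans hi)) _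

theorem exists_mem_augV_sub_mem_Jl {p : ℕ → ℕ} (hp : ∀ i, 1 ≤ i → (p i).Prime)
    (hinj : Set.InjOn p (Set.Ici 1)) {l : Y} {N : AddSubgroup Vsp} {i₀ : ℕ} {w : ZG}
    (hw : w ∈ grpIdeal ℤ (subgroupOfV (Hsub l i₀)))
    (hwN : ∀ i, 1 ≤ i → i < i₀ →
      coeffHom (p i) w ∈ grpIdeal (ZMod (p i)) (subgroupOfV (N ⊔ Hsub l i))) :
    ∃ c ∈ augV N, w - c ∈ Jl p l := by
  have hcop : (Finset.Ico 1 i₀ : Set ℕ).Pairwise fun i j => IsCoprime (p i : ℤ) (p j) :=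
    fun i hi j hj hij => Nat.isCoprime_iff_coprime.2 <|
      (Nat.coprime_primes (hp i (Finset.mem_Ico.1 hi).1) (hp j (Finset.mem_Ico.1 hj).1)).2
        fun h => hij (hinj (Finset.mem_Ico.1 hi).1 (Finset.mem_Ico.1 hj).1 h)
  obtain ⟨c, ⟨hcN, hcA⟩, hc⟩ := exists_forall_sub_mem_of_pairwise_isCoprime hcop
    (augV N ⊓ grpIdeal ℤ (subgroupOfV (Hsub l i₀))).toAddSubgroup
    (fun i => (grpIdeal (ZMod (p i)) (subgroupOfV (Hsub l i))).toAddSubgroup.comap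
      (coeffHom (p i)).toAddMonoidHom)
    (fun i _ x => by
      show coeffHom (p i) ((p i : ℤ) • x) ∈ grpIdeal (ZMod (p i)) (subgroupOfV (Hsub l i))
      rw [map_zsmul, ← Int.cast_smul_eq_zsmul (ZMod (p i)), Int.cast_natCast, ZMod.natCast_self,
        zero_smul]
      exact zero_mem _)
    w (fun i hi => exists_mem_augV_inf_coeffHom_sub_mem
      (Hsub_mono l (Finset.mem_Ico.1 hi).2.le) (p i) hw
      (hwN i (Finset.mem_Ico.1 hi).1 (Finset.mem_Ico.1 hi).2))
  refine ⟨c, hcN, mem_Jl_iff.2 fun i hi => ?_⟩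
  rcases lt_or_ge i i₀ with hii₀ | hii₀
  · exact hc i (Finset.mem_Ico.2 ⟨hi, hii₀⟩)
  · exact coeffHom_mem_grpIdeal (grpIdeal_subgroupOfV_mono ℤ (Hsub_mono l hii₀) (sub_mem hw hcA))

theorem Jl_le_Jl_sup_augV {p : ℕ → ℕ} (hp : ∀ i, 1 ≤ i → (p i).Prime)
    (hinj : Set.InjOn p (Set.Ici 1)) {γ β : Y} {N : AddSubgroup Vsp}
    (h : ∀ i, 1 ≤ i → N ⊔ Hsub γ i = N ⊔ Hsub β i) : Jl p γ ≤ Jl p β ⊔ augV N := by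
  intro z hz
  obtain ⟨i₀, hi₀, hzγ⟩ := exists_mem_grpIdeal_Hsub_of_mem_Jl hinj hz
  have hzβ : z ∈ grpIdeal ℤ (subgroupOfV (N ⊔ Hsub β i₀)) :=
    h i₀ hi₀ ▸ grpIdeal_subgroupOfV_mono ℤ le_sup_right hzγ
  obtain ⟨b, hb, w, hw, rfl⟩ := Submodule.mem_sup.1 (grpIdeal_subgroupOfV_sup_le ℤ _ _ hzβ)
  have hwN (i : ℕ) (hi : 1 ≤ i) :
      coeffHom (p i) w ∈ grpIdeal (ZMod (p i)) (subgroupOfV (N ⊔ Hsub β i)) := by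
    have hzN := grpIdeal_subgroupOfV_mono _ (le_sup_right (a := N)) (mem_Jl_iff.1 hz i hi)
    rw [h i hi, map_add] at hzN
    simpa using sub_mem hzN
      (coeffHom_mem_grpIdeal (grpIdeal_subgroupOfV_mono ℤ le_sup_left hb))
  obtain ⟨c, hc, hwc⟩ := exists_mem_augV_sub_mem_Jl hp hinj hw fun i hi _ => hwN i hi
  rw [show b + w = (w - c) + (b + c) by abel]
  exact add_mem (Submodule.mem_sup_left hwc)
    (Submodule.mem_sup_right (add_mem (augV_eq_grpIdeal N ▸ hb) hc))

theorem stmt5_general (p : ℕ → ℕ) (hp : ∀ i, 1 ≤ i → (p i).Prime)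
    (hinj : ∀ i j, 1 ≤ i → 1 ≤ j → p i = p j → i = j)
    (γ β : Y) (N : AddSubgroup Vsp)
    (h : ∀ i : ℕ, 1 ≤ i → N ⊔ Hsub γ i = N ⊔ Hsub β i) :
    Jl p γ ⊔ augV N = Jl p β ⊔ augV N := by
  have hinj' : Set.InjOn p (Set.Ici 1) := fun i hi j hj => hinj i j hi hj
  exact le_antisymm (sup_le (Jl_le_Jl_sup_augV hp hinj' h) le_sup_right)
    (sup_le (Jl_le_Jl_sup_augV hp hinj' fun i hi => (h i hi).symm) le_sup_right)

theorem stmt5 (p : ℕ → ℕ) (hp : ∀ i, 1 ≤ i → (p i).Prime)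
    (hinj : ∀ i j, 1 ≤ i → 1 ≤ j → p i = p j → i = j)
    (γ β : Y) (N : AddSubgroup Vsp) (hN : (subgroupOfV N).Normal)
    (h : ∀ i : ℕ, 1 ≤ i → N ⊔ Hsub γ i = N ⊔ Hsub β i) :
    Jl p γ ⊔ augV N = Jl p β ⊔ augV N :=
  stmt5_general p hp hinj γ β N h
end
end

section
/- Let G be a group, V a subgroup of G, and (p_i)_{i≥1} an infinite sequence of pairwise distinct primes. Then ⋂_{i=1}^∞ ((V − 1)ℤG + p_i ℤG) = (V − 1)ℤG, where (V − 1)ℤG denotes the right ideal of the integral group ring ℤG generated by {v − 1 : v ∈ V}. -/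
/-! The left ideal generated by the elements `v - 1`, `v ∈ V`, is the kernel of the additive map
`ℤG → ℤ[G ⧸ V]` induced by `g ↦ gV`: it lies in the kernel because this map is `G`-equivariant,
and it contains the kernel because `g - g' = g' (g'⁻¹ g - 1)` whenever `gV = g'V`. An element of
the intersection is therefore mapped into `p_i ℤ[G ⧸ V]` for every `i`, so each coefficient of its
image is divisible by infinitely many integers and vanishes. -/

open Function MonoidAlgebra

theorem Int.eq_zero_of_forall_dvd_of_injective {p : ℕ → ℕ} (hp : Injective p) {a : ℤ}
    (h : ∀ i, (p i : ℤ) ∣ a) : a = 0 := by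
  obtain ⟨_, ⟨i, rfl⟩, hlt⟩ := (Set.infinite_range_of_injective hp).exists_gt |a|.toNat
  exact Int.eq_zero_of_abs_lt_dvd (h i) (by omega)

namespace MonoidAlgebra

theorem eq_zero_of_forall_dvd_of_injective {X : Type*} {p : ℕ → ℕ} (hp : Injective p)
    {x : ℤ[X]} (h : ∀ i, ∃ y, x = (p i : ℤ) • y) : x = 0 := by
  ext a
  refine Int.eq_zero_of_forall_dvd_of_injective hp fun i => ?_
  obtain ⟨y, rfl⟩ := h i
  exact ⟨y.coeff a, by simp⟩

theorem mem_of_mapDomainLinearMap_eq_zero {S M N : Type*} [Ring S] [Nonempty M] (f : M → N)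
    (P : AddSubgroup S[M]) (hP : ∀ a b s, f a = f b → single a s - single b s ∈ P) {x : S[M]}
    (hx : mapDomainLinearMap ℤ S f x = 0) : x ∈ P := by
  set rep := fun a => invFun f (f a)
  have hrep : ∀ a, f a = f (rep a) := fun a => (invFun_eq ⟨a, rfl⟩).symm
  have hsub : ∀ y : S[M], y - mapDomainLinearMap ℤ S rep y ∈ P := by
    intro y
    induction y using MonoidAlgebra.induction_linear with
    | zero => simp
    | add y z hy hz => simpa [add_sub_add_comm] using add_mem hy hz
    | single a s => simpa using hP a (rep a) s (hrep a)
  have hfactor : rep = invFun f ∘ f := rfl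
  simpa [hfactor, hx] using hsub x

variable {k G : Type*} [Ring k] [Group G] (V : Subgroup G)

theorem mapDomainLinearMap_mk_single_mul (h : G) (c : k) (x : k[G]) :
    mapDomainLinearMap ℤ k (QuotientGroup.mk : G → G ⧸ V) (single h c * x) =
      c • mapDomainLinearMap ℤ k (h • · : G ⧸ V → G ⧸ V)
        (mapDomainLinearMap ℤ k QuotientGroup.mk x) := by
  induction x using MonoidAlgebra.induction_linear with
  | zero => simp
  | add x y hx hy => simp [mul_add, hx, hy]
  | single g d => simp [single_mul_single, smul_single]

theorem mapDomainLinearMap_mk_mul_eq_zero {r x : k[G]}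
    (hx : mapDomainLinearMap ℤ k (QuotientGroup.mk : G → G ⧸ V) x = 0) :
    mapDomainLinearMap ℤ k (QuotientGroup.mk : G → G ⧸ V) (r * x) = 0 := by
  induction r using MonoidAlgebra.induction_linear with
  | zero => simp
  | add r s hr hs => simp [add_mul, hr, hs]
  | single h c => simp [mapDomainLinearMap_mk_single_mul, hx]

theorem mem_span_of_sub_one_iff_mapDomainLinearMap_eq_zero {x : k[G]} :
    x ∈ Ideal.span ((fun g : G => (of k G g : k[G]) - 1) '' (V : Set G)) ↔
      mapDomainLinearMap ℤ k (QuotientGroup.mk : G → G ⧸ V) x = 0 := by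
  constructor
  · intro hx
    induction hx using Submodule.span_induction with
    | mem y hy =>
      obtain ⟨v, hv, rfl⟩ := hy
      have hv' : (v : G ⧸ V) = ((1 : G) : G ⧸ V) := QuotientGroup.eq.mpr (by simpa using hv)
      simp [one_def, hv']
    | zero => simp
    | add y z _ _ hy hz => simp [hy, hz]
    | smul r y _ hy => exact mapDomainLinearMap_mk_mul_eq_zero V hy
  · refine fun hx => (Submodule.mem_toAddSubgroup _).mp <|
      mem_of_mapDomainLinearMap_eq_zero _ _ (fun a b s hab => ?_) hx
    have hsingle : single a s - single b s = single b s * ((of k G (b⁻¹ * a) : k[G]) - 1) := by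
      simp [mul_sub, single_mul_single]
    rw [Submodule.mem_toAddSubgroup, hsingle]
    exact Ideal.mul_mem_left _ _ (Ideal.subset_span ⟨b⁻¹ * a, QuotientGroup.eq.mp hab.symm, rfl⟩)

end MonoidAlgebra

theorem Ideal.iInf_sup_span_intCast_eq {R M : Type*} [Ring R] [AddCommGroup M] (I : Ideal R)
    (φ : R →+ M) (hI : ∀ x, x ∈ I ↔ φ x = 0) (p : ℕ → ℕ)
    (hM : ∀ m : M, (∀ i, ∃ y, m = (p i : ℤ) • y) → m = 0) :
    ⨅ i, I ⊔ Ideal.span {((p i : ℤ) : R)} = I := by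
  refine le_antisymm (fun x hx => (hI x).mpr (hM _ fun i => ?_)) (le_iInf fun _ => le_sup_left)
  obtain ⟨y, hy, z, hz, rfl⟩ := Submodule.mem_sup.mp (Submodule.mem_iInf _ |>.mp hx i)
  obtain ⟨a, rfl⟩ := Ideal.mem_span_singleton'.mp hz
  exact ⟨φ a, by rw [map_add, (hI y).mp hy, zero_add, ← zsmul_eq_mul', map_zsmul]⟩

theorem inf_aug_add_primes_general (G : Type) [Group G] (V : Subgroup G) (p : ℕ → ℕ)
    (hinj : Function.Injective p) :
    (⨅ i : ℕ,
      (Ideal.span ((fun g : G => (MonoidAlgebra.of ℤ G g : MonoidAlgebra ℤ G) - 1) ''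
          (V : Set G)) ⊔
        Ideal.span {((p i : ℤ) : MonoidAlgebra ℤ G)})) =
    Ideal.span ((fun g : G => (MonoidAlgebra.of ℤ G g : MonoidAlgebra ℤ G) - 1) ''
      (V : Set G)) :=
  Ideal.iInf_sup_span_intCast_eq _
    (mapDomainLinearMap ℤ ℤ (QuotientGroup.mk : G → G ⧸ V)).toAddMonoidHom
    (fun _ => mem_span_of_sub_one_iff_mapDomainLinearMap_eq_zero V) p
    (fun _ => eq_zero_of_forall_dvd_of_injective hinj)

/-- Let `G` be a group, `V` a subgroup of `G`, and `(p i)` an infinite sequence of pairwise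
distinct primes.  Then `⋂_{i} ((V - 1)ℤG + p_i ℤG) = (V - 1)ℤG`, where `(V - 1)ℤG` denotes
the ideal of the integral group ring `ℤG` generated by `{v - 1 : v ∈ V}` (the paper's right
ideals are mirrored by left ideals here). -/
theorem inf_aug_add_primes (G : Type) [Group G] (V : Subgroup G) (p : ℕ → ℕ)
    (hp : ∀ i, (p i).Prime) (hinj : Function.Injective p) :
    (⨅ i : ℕ,
      (Ideal.span ((fun g : G => (MonoidAlgebra.of ℤ G g : MonoidAlgebra ℤ G) - 1) ''
          (V : Set G)) ⊔
        Ideal.span {((p i : ℤ) : MonoidAlgebra ℤ G)})) =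
    Ideal.span ((fun g : G => (MonoidAlgebra.of ℤ G g : MonoidAlgebra ℤ G) - 1) ''
      (V : Set G)) :=
  inf_aug_add_primes_general G V p hinj
end

section
/- Let e = 30 (the exponent of Alt(5)). For every n ≥ 1, the level stabilizer St_W(n) is the closure in W of the subgroup generated by all e^n-th powers: concretely, for all n and all m ≥ n, the image in Aut(T[m]) of the subgroup of W generated by {w^{e^n} : w ∈ W} equals the image in Aut(T[m]) of St_W(n). In particular St_W(n) is a topologically characteristic subgroup of W, preserved by every continuous automorphism of W. -/
noncomputable section

/-- The vertex set of the rooted 5-regular tree `T`: finite words over the alphabet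
`{1,…,5}` (realised as `Fin 5`), the empty word being the root; a word `w` is joined to
the words `w ++ [x]`. -/
abbrev Vtx : Type := List (Fin 5)

/-- The profinite branch group `W ≤ Aut(T)`: the group of automorphisms of the rooted tree
`T` (permutations of the vertices fixing the root and sending the children of a vertex to
the children of its image) all of whose local permutations lie in `Alt(5)`. -/
def Wgrp : Subgroup (Equiv.Perm Vtx) where
  carrier := {σ | σ [] = [] ∧
    ∀ w : Vtx, ∃ π : Equiv.Perm (Fin 5), π ∈ alternatingGroup (Fin 5) ∧
      ∀ x : Fin 5, σ (w ++ [x]) = σ w ++ [π x]}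
  one_mem' := ⟨rfl, fun w => ⟨1, one_mem _, fun x => rfl⟩⟩
  mul_mem' := by
    rintro a b ⟨ha0, ha⟩ ⟨hb0, hb⟩
    refine ⟨by simp [Equiv.Perm.mul_apply, hb0, ha0], fun w => ?_⟩
    obtain ⟨πb, hπb, hb'⟩ := hb w
    obtain ⟨πa, hπa, ha'⟩ := ha (b w)
    exact ⟨πa * πb, mul_mem hπa hπb,
      fun x => by simp [Equiv.Perm.mul_apply, hb' x, ha' (πb x)]⟩
  inv_mem' := by
    rintro σ ⟨h0, h⟩
    refine ⟨by exact Equiv.Perm.inv_eq_iff_eq.mpr h0.symm, fun w => ?_⟩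
    obtain ⟨π, hπ, h'⟩ := h (σ⁻¹ w)
    refine ⟨π⁻¹, inv_mem hπ, fun x => ?_⟩
    have : σ (σ⁻¹ w ++ [π⁻¹ x]) = w ++ [x] := by
      rw [h' (π⁻¹ x)]
      simp
    calc σ⁻¹ (w ++ [x]) = σ⁻¹ (σ (σ⁻¹ w ++ [π⁻¹ x])) := by rw [this]
    _ = σ⁻¹ w ++ [π⁻¹ x] := by simp

theorem Wgrp.length_eq {σ : Equiv.Perm Vtx} (hσ : σ ∈ Wgrp) (w : Vtx) :
    (σ w).length = w.length := by
  induction w using List.reverseRecOn with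
  | nil => simp [hσ.1]
  | append_singleton w x ih =>
      obtain ⟨π, _, h⟩ := hσ.2 w
      simp [h x, ih]

/-- The `n`-th level stabilizer `St_W(n) ≤ W`: the kernel of the restriction map
`W → Aut(T[n])`, i.e. the set of elements of `W` fixing every word of length at most `n`. -/
def StW (n : ℕ) : Subgroup ↥Wgrp where
  carrier := {σ | ∀ w : Vtx, w.length ≤ n → (σ : Equiv.Perm Vtx) w = w}
  one_mem' := fun w _ => rfl
  mul_mem' := by
    intro a b ha hb w hw
    have : ((a * b : ↥Wgrp) : Equiv.Perm Vtx) w = (a : Equiv.Perm Vtx) ((b : Equiv.Perm Vtx) w) := rfl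
    rw [this, hb w hw, ha w hw]
  inv_mem' := by
    intro σ hσ w hw
    have hlen : ((σ : Equiv.Perm Vtx)⁻¹ w).length = w.length := by
      conv_rhs => rw [← (Equiv.apply_symm_apply (σ : Equiv.Perm Vtx) w :
        (σ : Equiv.Perm Vtx) ((σ : Equiv.Perm Vtx)⁻¹ w) = w)]
      exact (Wgrp.length_eq σ.2 _).symm
    have : (σ : Equiv.Perm Vtx) ((σ : Equiv.Perm Vtx)⁻¹ w) = (σ : Equiv.Perm Vtx)⁻¹ w :=
      hσ _ (hlen.le.trans hw)
    have h2 : (σ : Equiv.Perm Vtx) ((σ : Equiv.Perm Vtx)⁻¹ w) = w :=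
      Equiv.apply_symm_apply _ w
    exact this.symm.trans h2

/-- The subgroup of `W` generated by all `e^n`-th powers, where `e = 30` is the exponent
of `Alt(5)`. -/
def powSub (n : ℕ) : Subgroup ↥Wgrp :=
  Subgroup.closure {g : ↥Wgrp | ∃ w : ↥Wgrp, g = w ^ (30 ^ n)}

/-!
Since `Alt(5)` has exponent `30`, the `30`-th power of an element of `St_W(m)` lies in
`St_W(m+1)`; hence `⟨w^{30^n}⟩ ≤ St_W(n)`. Conversely, modulo `St_W(m+1)` every element of
`St_W(m)` is a product of rigid automorphisms at vertices of level `m`, so it suffices that rigid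
automorphisms at depth `≥ n` are products of `30^n`-th powers. If an even involution `ρ` moves
`a` to `b`, then `g = ρ · (h at a)` has `g² = (h at a)(h at b)`, and since `h at b` commutes with
everything supported below `a`, the commutator `[h^M, k]` grafted at `a` equals
`[g^{2M}, k at a]`. As `Alt(5)` is simple and non-abelian, induction on the depth puts the rigid
automorphisms at depth `≥ n` into `⟨w^{2^n s}⟩` for every odd `s`; take `s = 15^n`. Thus
`St_W(n) = ⟨w^{30^n}⟩ · St_W(m)` for `m ≥ n`. Automorphisms preserve `⟨w^{30^n}⟩`, and a
continuous one maps `St_W(m)` into `St_W(n)` for large `m`, so it preserves `St_W(n)`.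
-/

open Equiv
open scoped commutatorElement

section PowClosure

variable (G : Type*) [Group G]

def powClosure (t : ℕ) : Subgroup G :=
  Subgroup.closure {g | ∃ w : G, g = w ^ t}

variable {G}

lemma pow_mem_powClosure (w : G) (t : ℕ) : w ^ t ∈ powClosure G t :=
  Subgroup.subset_closure ⟨w, rfl⟩

lemma map_powClosure_le {H : Type*} [Group H] (f : G →* H) (t : ℕ) :
    (powClosure G t).map f ≤ powClosure H t := by
  rw [powClosure, MonoidHom.map_closure, Subgroup.closure_le]
  rintro _ ⟨_, ⟨w, rfl⟩, rfl⟩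
  rw [map_pow]
  exact pow_mem_powClosure (f w) t

instance powClosure_normal (t : ℕ) : (powClosure G t).Normal :=
  ⟨fun g hg c => map_powClosure_le (MulAut.conj c).toMonoidHom t ⟨g, hg, rfl⟩⟩

end PowClosure

lemma exists_inv_mul_mem_iff_mem_sup {G : Type*} [Group G] {H N : Subgroup G} [N.Normal]
    {σ : G} : (∃ g ∈ H, g⁻¹ * σ ∈ N) ↔ σ ∈ H ⊔ N := by
  rw [Subgroup.mem_sup_of_normal_right]
  constructor
  · rintro ⟨g, hg, hgσ⟩
    exact ⟨g, hg, _, hgσ, mul_inv_cancel_left g σ⟩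
  · rintro ⟨g, hg, z, hz, rfl⟩
    exact ⟨g, hg, by rwa [inv_mul_cancel_left]⟩

lemma commutatorElement_mul_left_of_commute {G : Type*} [Group G] {x y c : G}
    (h : Commute y c) : ⁅x * y, c⁆ = ⁅x, c⁆ := by
  rw [commutatorElement_def, commutatorElement_def, mul_assoc x y c, h.eq]
  group

lemma IsSimpleGroup.apply_mem_of_ne_one {A G : Type*} [Group A] [IsSimpleGroup A] [Group G]
    (f : A →* G) (N : Subgroup G) [N.Normal] {g : A} (hg : g ≠ 1) (hgN : f g ∈ N) (π : A) :
    f π ∈ N := by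
  have hne : N.comap f ≠ ⊥ := fun h => hg (by simpa [h] using (Subgroup.mem_comap.2 hgN))
  have htop : N.comap f = ⊤ :=
    (Subgroup.Normal.comap inferInstance f).eq_bot_or_eq_top.resolve_left hne
  exact Subgroup.mem_comap.1 (htop ▸ Subgroup.mem_top π)

section AlternatingFive

set_option maxRecDepth 100000 in
lemma alternatingGroup_five_pow_thirty {π : Perm (Fin 5)} (hπ : π ∈ alternatingGroup (Fin 5)) :
    π ^ 30 = 1 := by
  revert π
  simp only [Perm.mem_alternatingGroup]
  decide

lemma alternatingGroup_five_exists_involution (a : Fin 5) :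
    ∃ ρ ∈ alternatingGroup (Fin 5), ρ * ρ = 1 ∧ ρ a ≠ a := by
  simp only [Perm.mem_alternatingGroup]
  revert a
  decide

lemma alternatingGroup_five_exists_commutatorElement_ne_one :
    ∃ α β : alternatingGroup (Fin 5), ⁅α, β⁆ ≠ 1 := by
  have hα : swap (0 : Fin 5) 1 * swap 1 2 ∈ alternatingGroup (Fin 5) := by
    rw [Perm.mem_alternatingGroup]; decide
  have hβ : swap (0 : Fin 5) 1 * swap 2 3 ∈ alternatingGroup (Fin 5) := by
    rw [Perm.mem_alternatingGroup]; decide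
  have hne : ⁅swap (0 : Fin 5) 1 * swap 1 2, swap (0 : Fin 5) 1 * swap 2 3⁆ ≠ 1 := by decide
  exact ⟨⟨_, hα⟩, ⟨_, hβ⟩, fun h => hne (congrArg Subtype.val h)⟩

end AlternatingFive

def wreathFun (ρ : Perm (Fin 5)) (f : Fin 5 → Perm Vtx) : Vtx → Vtx
  | [] => []
  | x :: w => ρ x :: f x w

def wreath (ρ : Perm (Fin 5)) (f : Fin 5 → Perm Vtx) : Perm Vtx where
  toFun := wreathFun ρ f
  invFun := wreathFun ρ⁻¹ fun x => (f (ρ⁻¹ x))⁻¹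
  left_inv := by rintro (_ | ⟨x, w⟩) <;> simp [wreathFun]
  right_inv := by rintro (_ | ⟨x, w⟩) <;> simp [wreathFun]

@[simp] lemma wreath_nil (ρ : Perm (Fin 5)) (f : Fin 5 → Perm Vtx) : wreath ρ f [] = [] := rfl

@[simp] lemma wreath_cons (ρ : Perm (Fin 5)) (f : Fin 5 → Perm Vtx) (x : Fin 5) (w : Vtx) :
    wreath ρ f (x :: w) = ρ x :: f x w := rfl

lemma wreath_mul (ρ ρ' : Perm (Fin 5)) (f f' : Fin 5 → Perm Vtx) :
    wreath ρ f * wreath ρ' f' = wreath (ρ * ρ') fun x => f (ρ' x) * f' x := by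
  ext (_ | _) <;> rfl

lemma wreath_mem {ρ : Perm (Fin 5)} {f : Fin 5 → Perm Vtx} (hρ : ρ ∈ alternatingGroup (Fin 5))
    (hf : ∀ x, f x ∈ Wgrp) : wreath ρ f ∈ Wgrp := by
  refine ⟨rfl, fun w => ?_⟩
  cases w with
  | nil => exact ⟨ρ, hρ, fun x => by simp [(hf x).1]⟩
  | cons x u =>
    obtain ⟨π, hπ, h⟩ := (hf x).2 u
    exact ⟨π, hπ, fun y => by simp [h y]⟩

def rootW : alternatingGroup (Fin 5) →* ↥Wgrp where
  toFun π := ⟨wreath π 1, wreath_mem π.2 fun _ => one_mem _⟩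
  map_one' := Subtype.ext <| by ext (_ | _) <;> rfl
  map_mul' _ _ := Subtype.ext <| by ext (_ | _) <;> rfl

def belowW : (Fin 5 → ↥Wgrp) →* ↥Wgrp where
  toFun f := ⟨wreath 1 fun x => f x, wreath_mem (one_mem _) fun x => (f x).2⟩
  map_one' := Subtype.ext <| by ext (_ | _) <;> rfl
  map_mul' _ _ := Subtype.ext <| by ext (_ | _) <;> rfl

def graftW (a : Fin 5) : ↥Wgrp →* ↥Wgrp :=
  belowW.comp (MonoidHom.mulSingle (fun _ => ↥Wgrp) a)

lemma graftW_apply_cons (a : Fin 5) (h : ↥Wgrp) (x : Fin 5) (w : Vtx) :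
    (graftW a h : Perm Vtx) (x :: w) = x :: if x = a then (h : Perm Vtx) w else w := by
  change x :: (((Pi.mulSingle a h : Fin 5 → ↥Wgrp) x) : Perm Vtx) w = _
  by_cases hx : x = a
  · subst hx; simp
  · simp [hx]

lemma commute_graftW {a b : Fin 5} (hab : a ≠ b) (h k : ↥Wgrp) :
    Commute (graftW a h) (graftW b k) :=
  (Pi.mulSingle_commute (f := fun _ => ↥Wgrp) hab h k).map belowW

/-- `rigidW v π` acts by `π` on the children of the vertex `v` and trivially elsewhere. -/
def rigidW : Vtx → alternatingGroup (Fin 5) →* ↥Wgrp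
  | [] => rootW
  | a :: v => (graftW a).comp (rigidW v)

lemma rigidW_mem_StW (v : Vtx) (π : alternatingGroup (Fin 5)) : rigidW v π ∈ StW v.length := by
  induction v with
  | nil =>
    intro w hw
    rw [List.length_eq_zero_iff.1 (Nat.le_zero.1 hw)]
    exact (rigidW [] π).2.1
  | cons a v ih =>
    rintro (_ | ⟨x, w⟩) hw
    · exact (rigidW (a :: v) π).2.1
    · change (graftW a (rigidW v π) : Perm Vtx) (x :: w) = x :: w
      rw [graftW_apply_cons]
      split_ifs
      · rw [ih w (by simpa using hw)]
      · rfl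

lemma rigidW_apply_append_singleton (π : alternatingGroup (Fin 5)) (y : Fin 5) :
    ∀ (v u : Vtx), u.length = v.length →
      (rigidW v π : Perm Vtx) (u ++ [y]) = u ++ [if u = v then (π : Perm (Fin 5)) y else y]
  | [], u, hu => by
    rw [List.length_eq_zero_iff.1 hu]
    rfl
  | a :: v, [], hu => by simp at hu
  | a :: v, x :: u, hu => by
    change (graftW a (rigidW v π) : Perm Vtx) (x :: (u ++ [y])) = _
    rw [graftW_apply_cons, rigidW_apply_append_singleton π y v u (by simpa using hu)]
    by_cases hx : x = a <;> simp [hx]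

lemma exists_sq_eq_graftW_mul_graftW (a : Fin 5) (h : ↥Wgrp) :
    ∃ b ≠ a, ∃ g : ↥Wgrp, g ^ 2 = graftW a h * graftW b h := by
  obtain ⟨ρ, hρ, hρρ, hρa⟩ := alternatingGroup_five_exists_involution a
  have hiff : ∀ x, ρ x = a ↔ x = ρ a := fun x => by
    rw [← Perm.eq_inv_iff_eq, inv_eq_of_mul_eq_one_right hρρ]
  let F : Fin 5 → Perm Vtx := fun x => ((Pi.mulSingle a h : Fin 5 → ↥Wgrp) x)
  refine ⟨ρ a, hρa,
    ⟨wreath ρ F, wreath_mem hρ fun x => ((Pi.mulSingle a h : Fin 5 → ↥Wgrp) x).2⟩, ?_⟩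
  have hF : ∀ x, F (ρ x) = ((Pi.mulSingle (ρ a) h : Fin 5 → ↥Wgrp) x) := by
    intro x
    simp only [F, Pi.mulSingle_apply, hiff]
  rw [sq]
  change _ = belowW (Pi.mulSingle a h) * belowW (Pi.mulSingle (ρ a) h)
  rw [← map_mul, (Pi.mulSingle_commute (f := fun _ => ↥Wgrp) hρa.symm h h).eq]
  apply Subtype.ext
  change wreath ρ F * wreath ρ F =
    wreath 1 fun x => (((Pi.mulSingle (ρ a) h * Pi.mulSingle a h : Fin 5 → ↥Wgrp) x) : Perm Vtx)
  rw [wreath_mul, hρρ]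
  congr 1
  ext1 x
  rw [hF]
  rfl

lemma graftW_commutatorElement_pow_mem_powClosure (a : Fin 5) (M : ℕ) (h k : ↥Wgrp) :
    graftW a ⁅h ^ M, k⁆ ∈ powClosure ↥Wgrp (2 * M) := by
  obtain ⟨b, hba, g, hg⟩ := exists_sq_eq_graftW_mul_graftW a h
  have hpow : g ^ (2 * M) = graftW a (h ^ M) * graftW b (h ^ M) := by
    rw [pow_mul, hg, (commute_graftW hba.symm h h).mul_pow, map_pow, map_pow]
  -- `h^M` at `b` commutes with `k` at `a`, so it drops out of the commutator.
  have hcomm : graftW a ⁅h ^ M, k⁆ = ⁅g ^ (2 * M), graftW a k⁆ := by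
    rw [hpow, commutatorElement_mul_left_of_commute (commute_graftW hba _ _),
      map_commutatorElement]
  rw [hcomm]
  exact Subgroup.commutator_le_left _ ⊤
    (Subgroup.commutator_mem_commutator (pow_mem_powClosure g _) (Subgroup.mem_top _))

theorem rigidW_mem_powClosure {s : ℕ} (hs : Odd s) (n : ℕ) {v : Vtx} (hv : n ≤ v.length)
    (π : alternatingGroup (Fin 5)) : rigidW v π ∈ powClosure ↥Wgrp (2 ^ n * s) := by
  induction n generalizing v π with
  | zero =>
    obtain ⟨ρ, hρ, hρρ, hρ0⟩ := alternatingGroup_five_exists_involution 0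
    let ι : alternatingGroup (Fin 5) := ⟨ρ, hρ⟩
    have hι1 : ι ≠ 1 := fun h => hρ0 (by rw [show ρ = 1 from congrArg Subtype.val h]; rfl)
    have hιs : ι ^ s = ι := by
      obtain ⟨c, rfl⟩ := hs
      rw [pow_succ, pow_mul, sq, show ι * ι = 1 from Subtype.ext hρρ, one_pow, one_mul]
    refine IsSimpleGroup.apply_mem_of_ne_one (rigidW v) _ hι1 ?_ π
    rw [pow_zero, one_mul, ← hιs, map_pow]
    exact pow_mem_powClosure _ s
  | succ n ih =>
    obtain ⟨a, w, rfl⟩ : ∃ a w, v = a :: w := by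
      cases v with
      | nil => simp at hv
      | cons a w => exact ⟨a, w, rfl⟩
    set M := 2 ^ n * s
    have hS : powClosure ↥Wgrp M ≤
        Subgroup.upperCentralSeriesStep ((powClosure ↥Wgrp (2 * M)).comap (graftW a)) := by
      rw [powClosure, Subgroup.closure_le]
      rintro _ ⟨h, rfl⟩ k
      exact graftW_commutatorElement_pow_mem_powClosure a M h k
    obtain ⟨α, β, hαβ⟩ := alternatingGroup_five_exists_commutatorElement_ne_one
    have hαβS : rigidW w ⁅α, β⁆ ∈ (powClosure ↥Wgrp (2 * M)).comap (graftW a) := by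
      rw [map_commutatorElement]
      exact hS (ih (by simpa using hv) α) _
    rw [pow_succ', mul_assoc]
    exact IsSimpleGroup.apply_mem_of_ne_one (rigidW w) _ hαβ hαβS π

lemma rigidW_mem_powSub {n : ℕ} {v : Vtx} (hv : n ≤ v.length) (π : alternatingGroup (Fin 5)) :
    rigidW v π ∈ powSub n := by
  have h := rigidW_mem_powClosure (Odd.pow (n := n) (by decide : Odd 15)) n hv π
  rwa [← mul_pow] at h

lemma mem_StW_succ_iff {σ : ↥Wgrp} {m : ℕ} :
    σ ∈ StW (m + 1) ↔ σ ∈ StW m ∧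
      ∀ v : Vtx, v.length = m → ∀ x, (σ : Perm Vtx) (v ++ [x]) = v ++ [x] := by
  refine ⟨fun h => ⟨fun w hw => h w (by omega), fun v hv x => h _ (by simp [hv])⟩, ?_⟩
  rintro ⟨hm, hchildren⟩ w hw
  rcases Nat.lt_or_ge w.length (m + 1) with hlt | hge
  · exact hm w (by omega)
  obtain rfl | ⟨v, x, rfl⟩ := List.eq_nil_or_concat' w
  · simp at hge
  · exact hchildren v (by simp at hw hge; omega) x

instance StW_normal (m : ℕ) : (StW m).Normal where
  conj_mem τ hτ g w hw := by
    have hlen : ((g : Perm Vtx)⁻¹ w).length = w.length := Wgrp.length_eq (inv_mem g.2) w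
    change (g : Perm Vtx) ((τ : Perm Vtx) ((g : Perm Vtx)⁻¹ w)) = w
    rw [hτ _ (hlen.le.trans hw)]
    exact Equiv.apply_symm_apply _ w

lemma StW_antitone {m m' : ℕ} (h : m ≤ m') : StW m' ≤ StW m :=
  fun _ hσ w hw => hσ w (hw.trans h)

lemma pow_thirty_mem_StW_succ {σ : ↥Wgrp} {m : ℕ} (hσ : σ ∈ StW m) : σ ^ 30 ∈ StW (m + 1) := by
  refine mem_StW_succ_iff.2 ⟨pow_mem hσ 30, fun v hv x => ?_⟩
  obtain ⟨π, hπ, hσv⟩ := σ.2.2 v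
  have hpow : ∀ j : ℕ, ((σ : Perm Vtx) ^ j) (v ++ [x]) = v ++ [(π ^ j) x] := by
    intro j
    induction j generalizing x with
    | zero => rfl
    | succ j ih => rw [pow_succ, Perm.mul_apply, hσv, hσ v hv.le, ih, ← Perm.mul_apply, ← pow_succ]
  rw [Subgroup.coe_pow, hpow, alternatingGroup_five_pow_thirty hπ, Perm.one_apply]

lemma powSub_le_StW (n : ℕ) : powSub n ≤ StW n := by
  rw [powSub, Subgroup.closure_le]
  rintro _ ⟨σ, rfl⟩
  induction n with
  | zero =>
    intro w hw
    rw [List.length_eq_zero_iff.1 (Nat.le_zero.1 hw)]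
    exact (σ ^ _).2.1
  | succ n ih => rw [pow_succ, pow_mul]; exact pow_thirty_mem_StW_succ ih

lemma exists_inv_mul_fixes_children {m : ℕ} {K : Subgroup ↥Wgrp}
    (hK : ∀ v : Vtx, v.length = m → ∀ π, rigidW v π ∈ K) {τ : ↥Wgrp} (hτ : τ ∈ StW m)
    (F : Finset Vtx) (hF : ∀ v ∈ F, v.length = m) :
    ∃ c ∈ K, c⁻¹ * τ ∈ StW m ∧
      ∀ v ∈ F, ∀ x, ((c⁻¹ * τ : ↥Wgrp) : Perm Vtx) (v ++ [x]) = v ++ [x] := by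
  induction F using Finset.induction_on with
  | empty => exact ⟨1, one_mem K, by rwa [inv_one, one_mul], by simp⟩
  | insert v F hvF ih =>
    obtain ⟨c, hcK, hcm, hcF⟩ := ih fun u hu => hF u (Finset.mem_insert_of_mem hu)
    have hv : v.length = m := hF v (Finset.mem_insert_self v F)
    obtain ⟨π, hπ, hτv⟩ := (c⁻¹ * τ).2.2 v
    have hrm : rigidW v ⟨π, hπ⟩⁻¹ ∈ StW m := hv ▸ rigidW_mem_StW v _
    have hcr : (c * rigidW v ⟨π, hπ⟩)⁻¹ * τ = rigidW v ⟨π, hπ⟩⁻¹ * (c⁻¹ * τ) := by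
      rw [map_inv]; group
    refine ⟨c * rigidW v ⟨π, hπ⟩, mul_mem hcK (hK v hv _), ?_, ?_⟩
    · rw [hcr]; exact mul_mem hrm hcm
    intro u hu x
    rw [hcr, Subgroup.coe_mul, Perm.mul_apply]
    rcases Finset.mem_insert.1 hu with rfl | huF
    · rw [hτv, hcm u hv.le, rigidW_apply_append_singleton _ _ _ _ rfl, if_pos rfl]
      simp
    · rw [hcF u huF x, rigidW_apply_append_singleton _ _ _ _ ((hF u hu).trans hv.symm),
        if_neg (ne_of_mem_of_not_mem huF hvF)]

lemma StW_le_sup_StW_succ {m : ℕ} {K : Subgroup ↥Wgrp}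
    (hK : ∀ v : Vtx, v.length = m → ∀ π, rigidW v π ∈ K) : StW m ≤ K ⊔ StW (m + 1) := by
  intro τ hτ
  obtain ⟨c, hcK, hcm, hc⟩ := exists_inv_mul_fixes_children hK hτ
    (List.finite_length_eq (Fin 5) m).toFinset (by simp)
  rw [← mul_inv_cancel_left c τ]
  exact Subgroup.mul_mem_sup hcK (mem_StW_succ_iff.2 ⟨hcm, fun v hv => hc v (by simpa using hv)⟩)

lemma powSub_sup_StW {n m : ℕ} (hnm : n ≤ m) : powSub n ⊔ StW m = StW n := by
  refine le_antisymm (sup_le (powSub_le_StW n) (StW_antitone hnm)) ?_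
  induction m, hnm using Nat.le_induction with
  | base => exact le_sup_right
  | succ m hnm ih =>
    have hK : StW m ≤ powSub n ⊔ StW (m + 1) :=
      StW_le_sup_StW_succ fun v hv => rigidW_mem_powSub (hv ▸ hnm)
    calc StW n ≤ powSub n ⊔ StW m := ih
      _ ≤ powSub n ⊔ (powSub n ⊔ StW (m + 1)) := sup_le_sup_left hK _
      _ = powSub n ⊔ StW (m + 1) := by rw [← sup_assoc, sup_idem]

lemma agree_iff_inv_mul_mem_StW {g σ : ↥Wgrp} {m : ℕ} :
    (∀ w : Vtx, w.length ≤ m → (g : Perm Vtx) w = (σ : Perm Vtx) w) ↔ g⁻¹ * σ ∈ StW m := by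
  refine forall₂_congr fun w _ => ?_
  rw [Subgroup.coe_mul, Perm.mul_apply, InvMemClass.coe_inv, Perm.inv_eq_iff_eq, eq_comm]

lemma map_StW_le (φ : ↥Wgrp →* ↥Wgrp)
    (hφ : ∀ k : ℕ, ∃ j : ℕ, ∀ g : ↥Wgrp, g ∈ StW j → φ g ∈ StW k) (n : ℕ) :
    (StW n).map φ ≤ StW n := by
  obtain ⟨j, hj⟩ := hφ n
  calc (StW n).map φ = (powSub n ⊔ StW (max j n)).map φ := by
        rw [powSub_sup_StW (le_max_right j n)]
    _ ≤ StW n := by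
        rw [Subgroup.map_sup]
        refine sup_le ((map_powClosure_le φ _).trans (powSub_le_StW n)) ?_
        rintro _ ⟨g, hg, rfl⟩
        exact hj g (StW_antitone (le_max_left j n) hg)

theorem stabilizer_is_closure_of_powers_general (n : ℕ) :
    (∀ m : ℕ, n ≤ m → ∀ σ : ↥Wgrp,
      (∃ g ∈ powSub n, ∀ w : Vtx, w.length ≤ m →
          (g : Equiv.Perm Vtx) w = (σ : Equiv.Perm Vtx) w) ↔
      (∃ g ∈ StW n, ∀ w : Vtx, w.length ≤ m →
          (g : Equiv.Perm Vtx) w = (σ : Equiv.Perm Vtx) w)) ∧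
    (∀ φ : ↥Wgrp ≃* ↥Wgrp,
      (∀ k : ℕ, ∃ j : ℕ, ∀ g : ↥Wgrp, g ∈ StW j → φ g ∈ StW k) →
      (∀ k : ℕ, ∃ j : ℕ, ∀ g : ↥Wgrp, g ∈ StW j → φ.symm g ∈ StW k) →
      Subgroup.map φ.toMonoidHom (StW n) = StW n) := by
  refine ⟨fun m hnm σ => ?_, fun φ hφ hφsymm => ?_⟩
  · simp only [agree_iff_inv_mul_mem_StW, exists_inv_mul_mem_iff_mem_sup, powSub_sup_StW hnm,
      sup_eq_left.2 (StW_antitone hnm)]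
  · refine le_antisymm (map_StW_le φ.toMonoidHom hφ n) ?_
    rw [Subgroup.map_equiv_eq_comap_symm', ← Subgroup.map_le_iff_le_comap]
    exact map_StW_le φ.symm.toMonoidHom hφsymm n

/-- **Lemma.** For every `n ≥ 1`, the level stabilizer `St_W(n)` is the closure in `W` of
the subgroup generated by all `e^n`-th powers (`e = 30` being the exponent of `Alt(5)`):
for all `m ≥ n`, the image in `Aut(T[m])` of `⟨{w^{e^n} : w ∈ W}⟩` equals the image in
`Aut(T[m])` of `St_W(n)` — i.e. an element `σ ∈ W` agrees up to level `m` with an element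
of the one subgroup iff it does so with an element of the other.  In particular `St_W(n)`
is topologically characteristic: it is preserved by every automorphism `φ` of `W` which is
continuous together with its inverse. -/
theorem stabilizer_is_closure_of_powers (n : ℕ) (hn : 1 ≤ n) :
    (∀ m : ℕ, n ≤ m → ∀ σ : ↥Wgrp,
      (∃ g ∈ powSub n, ∀ w : Vtx, w.length ≤ m →
          (g : Equiv.Perm Vtx) w = (σ : Equiv.Perm Vtx) w) ↔
      (∃ g ∈ StW n, ∀ w : Vtx, w.length ≤ m →
          (g : Equiv.Perm Vtx) w = (σ : Equiv.Perm Vtx) w)) ∧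
    (∀ φ : ↥Wgrp ≃* ↥Wgrp,
      (∀ k : ℕ, ∃ j : ℕ, ∀ g : ↥Wgrp, g ∈ StW j → φ g ∈ StW k) →
      (∀ k : ℕ, ∃ j : ℕ, ∀ g : ↥Wgrp, g ∈ StW j → φ.symm g ∈ StW k) →
      Subgroup.map φ.toMonoidHom (StW n) = StW n) :=
  stabilizer_is_closure_of_powers_general n
end
end
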